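/- Let a group G act without inversions on a tree T and let H be a subgroup of G containing a hyperbolic element. Then every vertex of the quotient graph T_H/H of degree 1 is H-non-degenerate; that is, if v is a vertex of the minimal H-invariant subtree T_H such that there is exactly one H-orbit of ordered pairs (u,w) of adjacent vertices of T_H with u ∈ H·v, then H_v ≠ H_e for every edge e of T_H incident to v. -/

import Mathlib

open MulAction Pointwise

namespace Paper

variable {G V : Type*} [Group G] [MulAction G V]

/-- An element is hyperbolic if it fixes no vertex of the tree `T`. -/
def IsHyperbolic (_T : SimpleGraph V) (g : G) : Prop := ∀ v : V, g • v ≠ v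

/-- The number of orbits of the action of the group `H` on the subset `S`. -/
noncomputable def orbCount (H : Type*) [Group H] {α : Type*} [MulAction H α]
    (S : Set α) : ℕ :=
  Nat.card (Quotient (Setoid.comap (Subtype.val : S → α) (MulAction.orbitRel H α)))

/-- The action of the group `H` on the subset `S` has finitely many orbits. -/
def QuotFinite (H : Type*) [Group H] {α : Type*} [MulAction H α] (S : Set α) : Prop :=
  Finite (Quotient (Setoid.comap (Subtype.val : S → α) (MulAction.orbitRel H α)))

/-- Ordered edges of the induced subgraph of `T` on `S`. -/
def orderedEdges (T : SimpleGraph V) (S : Set V) : Set (V × V) :=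
  {p : V × V | p.1 ∈ S ∧ p.2 ∈ S ∧ T.Adj p.1 p.2}

/-- `S` is the vertex set of a nonempty `H`-invariant subtree of `T`. -/
def InvSubtree (T : SimpleGraph V) (H : Subgroup G) (S : Set V) : Prop :=
  (∀ h ∈ H, ∀ v ∈ S, h • v ∈ S) ∧ (T.induce S).Connected

/-- The (vertex set of the) minimal `H`-invariant subtree `T_H` of `T`: the
intersection of all nonempty `H`-invariant subtrees.  (When `H` contains a
hyperbolic element this is the unique minimal nonempty `H`-invariant subtree.) -/
def minSubtree (T : SimpleGraph V) (H : Subgroup G) : Set V :=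
  ⋂₀ {S : Set V | InvSubtree T H S}

/-- `v` is `H`-degenerate with respect to the subtree with vertex set `S`:
`H_v = H_e` for some edge `e` of `S` incident to `v`. -/
def DegenIn (T : SimpleGraph V) (H : Subgroup G) (S : Set V) (v : V) : Prop :=
  ∃ w ∈ S, T.Adj v w ∧ H ⊓ MulAction.stabilizer G v ≤ MulAction.stabilizer G w

/-- The `H`-nondegenerate vertices of the subtree with vertex set `S`. -/
def ndegSet (T : SimpleGraph V) (H : Subgroup G) (S : Set V) : Set V :=
  {v ∈ S | ¬ DegenIn T H S v}

/-- The star of `[v]_H` in the quotient graph `S/H`, as the set of ordered edges of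
`S` with initial vertex in the `H`-orbit of `v` (an edge of the quotient in the star
of `[v]_H` is an `H`-orbit of such pairs). -/
def starSet (T : SimpleGraph V) (H : Subgroup G) (S : Set V) (v : V) : Set (V × V) :=
  {p : V × V | p.1 ∈ S ∧ p.2 ∈ S ∧ T.Adj p.1 p.2 ∧ p.1 ∈ MulAction.orbit H v}

/-- The degree of the vertex `[v]_H` in the quotient graph `S/H`: the number of
`H`-orbits of ordered pairs `(u, w)` of adjacent vertices of `S` with `u ∈ H • v`. -/
noncomputable def quotDegree (T : SimpleGraph V) (H : Subgroup G) (S : Set V) (v : V) : ℕ :=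
  orbCount H (starSet T H S v)

/-- The rank of the quotient graph `T_H/H`, i.e. #edges − #vertices + 1
(each unordered edge corresponds to two `H`-orbits of ordered edges). -/
noncomputable def quotRank (T : SimpleGraph V) (H : Subgroup G) : ℕ :=
  orbCount H (orderedEdges T (minSubtree T H)) / 2 + 1 - orbCount H (minSubtree T H)

open Classical in
/-- The complexity `C_T(H)`: if `H` contains a hyperbolic element it is
`r(T_H/H) + #(H-orbits of H-nondegenerate vertices of T_H)`, and `1` otherwise. -/
noncomputable def complexity (T : SimpleGraph V) (H : Subgroup G) : ℕ :=
  if ∃ h ∈ H, IsHyperbolic T h then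
    quotRank T H + orbCount H (ndegSet T H (minSubtree T H))
  else 1

/-- The reduced complexity `C̄_T(H) = max {C_T(H) − 1, 0}`. -/
noncomputable def rComplexity (T : SimpleGraph V) (H : Subgroup G) : ℕ :=
  complexity T H - 1

/-- `H` is tame: either `H` fixes a vertex, or `H` contains a hyperbolic element
and the quotient graph `T_H/H` is finite. -/
def Tame (T : SimpleGraph V) (H : Subgroup G) : Prop :=
  (∃ v : V, ∀ h ∈ H, h • v = v) ∨
    ((∃ h ∈ H, IsHyperbolic T h) ∧ QuotFinite H (minSubtree T H) ∧
      QuotFinite H (orderedEdges T (minSubtree T H)))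

end Paper

/-!
If `[v]_H` has degree one and `H_v` fixes the neighbour `w` of `v` in `T_H`, then any two ordered
edges of `T_H` starting in the orbit `H • v` are `H`-translates of `(v, w)`, so every `g • v` is a
leaf of `T_H` whose only neighbour is `g • w`. Since `H` acts without inversions, `w ∉ H • v`.
Removing the orbit of leaves `H • v` from `T_H` keeps it connected and `H`-invariant, and it still
contains `w`: this contradicts the minimality of `T_H`.
-/

namespace SimpleGraph

variable {V : Type*} {T : SimpleGraph V}

theorem Reachable.exists_isPath_of_induce {s : Set V} {x y : s}
    (h : (T.induce s).Reachable x y) :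
    ∃ p : T.Walk x y, p.IsPath ∧ ∀ z ∈ p.support, z ∈ s := by
  obtain ⟨p, hp⟩ := h.exists_isPath
  have hps : ∀ z ∈ (p.map (Embedding.induce s).toHom).support, z ∈ s := by
    intro z hz
    simp only [Walk.support_map, List.mem_map] at hz
    obtain ⟨z', -, rfl⟩ := hz
    exact z'.2
  exact ⟨_, hp.map (Embedding.induce (G := T) s).injective, hps⟩

theorem IsAcyclic.mem_of_mem_support_of_isPath (hT : T.IsAcyclic) {s : Set V}
    (hs : (T.induce s).Preconnected) {x y : V} (hx : x ∈ s) (hy : y ∈ s) {p : T.Walk x y}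
    (hp : p.IsPath) {z : V} (hz : z ∈ p.support) : z ∈ s := by
  obtain ⟨q, hq, hqs⟩ := (hs ⟨x, hx⟩ ⟨y, hy⟩).exists_isPath_of_induce
  have hpq : p = q := congrArg Subtype.val ((hT.subsingleton_path x y).elim ⟨p, hp⟩ ⟨q, hq⟩)
  exact hqs z (hpq ▸ hz)

/-- An interior vertex of a path has two distinct neighbours on it. -/
theorem Walk.IsPath.notMem_of_mem_support {s O : Set V}
    (hO : ∀ z ∈ O, z ∈ s → (T.neighborSet z ∩ s).Subsingleton) {x y : V} {p : T.Walk x y}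
    (hp : p.IsPath) (hps : ∀ z ∈ p.support, z ∈ s) (hx : x ∉ O) (hy : y ∉ O) :
    ∀ z ∈ p.support, z ∉ O := by
  induction p with
  | nil => simpa using hx
  | @cons x a y hxa p ih =>
    rw [Walk.cons_isPath_iff] at hp
    have ha : a ∉ O := by
      intro ha
      cases p with
      | nil => exact hy ha
      | @cons _ b _ hab q =>
        have hxb : x = b := hO a ha (hps a (by simp)) ⟨hxa.symm, hps x (by simp)⟩
          ⟨hab, hps b (by simp)⟩
        exact hp.2 (by simp [hxb])
    rw [Walk.support_cons, List.forall_mem_cons]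
    exact ⟨hx, ih hp.1 (fun z hz => hps z (List.mem_cons_of_mem x hz)) ha hy⟩

theorem Preconnected.induce_diff {s O : Set V} (hs : (T.induce s).Preconnected)
    (hO : ∀ z ∈ O, z ∈ s → (T.neighborSet z ∩ s).Subsingleton) :
    (T.induce (s \ O)).Preconnected := by
  rintro ⟨x, hxs, hxO⟩ ⟨y, hys, hyO⟩
  obtain ⟨p, hp, hps⟩ := (hs ⟨x, hxs⟩ ⟨y, hys⟩).exists_isPath_of_induce
  have hpO := hp.notMem_of_mem_support hO hps hxO hyO
  exact (p.induce (s \ O) fun z hz => ⟨hps z hz, hpO z hz⟩).reachable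

end SimpleGraph

namespace Paper

variable {V G : Type*} [Group G] [MulAction G V] {T : SimpleGraph V} {H : Subgroup G}

theorem smul_mem_minSubtree {h : G} (hh : h ∈ H) {x : V} (hx : x ∈ minSubtree T H) :
    h • x ∈ minSubtree T H :=
  fun S hS => hS.1 h hh x (hx S hS)

theorem preconnected_induce_minSubtree (hconn : T.Connected) (hacyc : T.IsAcyclic) :
    (T.induce (minSubtree T H)).Preconnected := by
  rintro ⟨x, hx⟩ ⟨y, hy⟩
  obtain ⟨p, hp⟩ := (hconn.preconnected x y).exists_isPath
  refine (p.induce _ fun z hz => Set.mem_sInter.mpr fun S hS => ?_).reachable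
  exact hacyc.mem_of_mem_support_of_isPath hS.2.preconnected (hx S hS) (hy S hS) hp hz

/-- Otherwise `T_H \ O` would be a smaller `H`-invariant subtree. -/
theorem minSubtree_subset_of_leaves (hconn : T.Connected) (hacyc : T.IsAcyclic) {O : Set V}
    (hOinv : ∀ h ∈ H, ∀ z ∈ O, h • z ∈ O)
    (hleaf : ∀ z ∈ O, z ∈ minSubtree T H → (T.neighborSet z ∩ minSubtree T H).Subsingleton)
    (hO : (O ∩ minSubtree T H).Nonempty) : minSubtree T H ⊆ O := by
  by_contra hsub
  obtain ⟨x, hxS, hxO⟩ := Set.not_subset.mp hsub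
  have hinv : InvSubtree T H (minSubtree T H \ O) := by
    refine ⟨fun h hh z hz => ⟨smul_mem_minSubtree hh hz.1, fun hzO => hz.2 ?_⟩, ?_⟩
    · simpa using hOinv h⁻¹ (inv_mem hh) _ hzO
    · exact (SimpleGraph.connected_iff _).mpr
        ⟨(preconnected_induce_minSubtree hconn hacyc).induce_diff hleaf, ⟨⟨x, hxS, hxO⟩⟩⟩
  obtain ⟨z, hzO, hzS⟩ := hO
  exact (Set.sInter_subset_of_mem hinv hzS).2 hzO

theorem mem_orbit_of_orbCount_eq_one {K α : Type*} [Group K] [MulAction K α] {S : Set α}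
    (h : orbCount K S = 1) {a b : α} (ha : a ∈ S) (hb : b ∈ S) : a ∈ orbit K b := by
  have hsub := (Nat.card_eq_one_iff_unique.mp h).1
  have hab := Quotient.exact (@Subsingleton.elim _ hsub ⟦⟨a, ha⟩⟧ ⟦⟨b, hb⟩⟧)
  exact orbitRel_apply.mp hab

theorem neighborSet_inter_subset_of_quotDegree_eq_one {S : Set V} {v w : V}
    (hdeg : quotDegree T H S v = 1) (hv : v ∈ S) (hw : w ∈ S) (hvw : T.Adj v w)
    (hstab : H ⊓ stabilizer G v ≤ stabilizer G w) (g : H) (hg : g • v ∈ S) :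
    T.neighborSet (g • v) ∩ S ⊆ {g • w} := by
  rintro u ⟨hu, huS⟩
  obtain ⟨h, hh⟩ := mem_orbit_of_orbCount_eq_one hdeg (a := (g • v, u)) (b := (v, w))
    ⟨hg, huS, hu, g, rfl⟩ ⟨hv, hw, hvw, mem_orbit_self v⟩
  simp only [Prod.smul_mk, Prod.mk.injEq] at hh
  have hfixv : (g⁻¹ * h) • v = v := by rw [mul_smul, hh.1, inv_smul_smul]
  have hfixw : (g⁻¹ * h) • w = w := hstab ⟨(g⁻¹ * h).2, hfixv⟩
  rw [← hh.2, Set.mem_singleton_iff, ← inv_smul_eq_iff, ← mul_smul, hfixw]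

end Paper

theorem nondegenerate_of_degree_one_general
    {V G : Type*} [Group G] [MulAction G V]
    (T : SimpleGraph V) (hconn : T.Connected) (hacyc : T.IsAcyclic)
    (hninv : ∀ (g : G) (u w : V), T.Adj u w → ¬(g • u = w ∧ g • w = u))
    (H : Subgroup G) :
    ∀ v ∈ Paper.minSubtree T H,
      Paper.quotDegree T H (Paper.minSubtree T H) v = 1 →
      ¬ Paper.DegenIn T H (Paper.minSubtree T H) v := by
  rintro v hv hdeg ⟨w, hw, hvw, hstab⟩
  have hnbr := Paper.neighborSet_inter_subset_of_quotDegree_eq_one hdeg hv hw hvw hstab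
  have hsub : Paper.minSubtree T H ⊆ orbit H v := by
    refine Paper.minSubtree_subset_of_leaves hconn hacyc
      (fun h hh z hz => mem_orbit_of_mem_orbit (⟨h, hh⟩ : H) hz) ?_ ⟨v, mem_orbit_self v, hv⟩
    rintro _ ⟨g, rfl⟩ hg
    exact Set.subsingleton_singleton.anti (hnbr g hg)
  obtain ⟨g, hg : g • v = w⟩ := hsub hw
  have hvg : v = g • w := hnbr g (hg ▸ hw) ⟨hg ▸ hvw.symm, hv⟩
  exact hninv g v w hvw ⟨hg, hvg.symm⟩

/-- Every vertex of valence one of the quotient graph `T_H/H` is `H`-nondegenerate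
(by minimality of `T_H`). -/
theorem nondegenerate_of_degree_one
    {V G : Type*} [Group G] [MulAction G V]
    (T : SimpleGraph V) (hconn : T.Connected) (hacyc : T.IsAcyclic)
    (hadj : ∀ (g : G) (u w : V), T.Adj u w → T.Adj (g • u) (g • w))
    (hninv : ∀ (g : G) (u w : V), T.Adj u w → ¬(g • u = w ∧ g • w = u))
    (H : Subgroup G) (hhyp : ∃ h ∈ H, Paper.IsHyperbolic T h) :
    ∀ v ∈ Paper.minSubtree T H,
      Paper.quotDegree T H (Paper.minSubtree T H) v = 1 →
      ¬ Paper.DegenIn T H (Paper.minSubtree T H) v :=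
  nondegenerate_of_degree_one_general T hconn hacyc hninv H
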